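/- arXiv:1207.2808 — 2 statements merged into one kernel-verified Lean document; each statement's English description precedes it below -/
import Mathlib

section
/- For the d-shift S = (S_1,…,S_d) on the Drury–Arveson space H²_d, the commutators [S_i*, S_j] = S_i* S_j − S_j S_i* belong to the Schatten class L^p for every p > d and all 1 ≤ i, j ≤ d; in particular trace(|[S_i*, S_j]|^p) < ∞ for all p > d. -/
open scoped InnerProductSpace
open MvPolynomial Module

noncomputable section

/-- The `n`-th approximation number of a bounded operator: the distance from `T`
to the set of operators of rank at most `n`. For compact operators on Hilbert space
these are the singular values. -/
def approxNumber {H K : Type*} [NormedAddCommGroup H] [NormedAddCommGroup K]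
    [NormedSpace ℂ H] [NormedSpace ℂ K] (T : H →L[ℂ] K) (n : ℕ) : ℝ :=
  sInf {c : ℝ | ∃ F : H →L[ℂ] K,
    Module.rank ℂ (LinearMap.range (F : H →ₗ[ℂ] K)) ≤ (n : Cardinal) ∧ c = ‖T - F‖}

/-- Membership in the Schatten `p`-class, expressed via approximation numbers
(= singular values): `∑ aₙ(T)^p < ∞`. -/
def MemSchatten {H K : Type*} [NormedAddCommGroup H] [NormedAddCommGroup K]
    [NormedSpace ℂ H] [NormedSpace ℂ K] (p : ℝ) (T : H →L[ℂ] K) : Prop :=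
  Summable fun n : ℕ => approxNumber T n ^ p


/-- Helper instance: the bounded operators on a normed space form a topological semiring. -/
instance {F : Type*} [NormedAddCommGroup F] [NormedSpace ℂ F] :
    IsTopologicalSemiring (F →L[ℂ] F) := inferInstance

/-- The Drury–Arveson space `H²_d`: a Hilbert space completion of `ℂ[z₁,…,z_d]`
with the inner product `⟨z^α, z^β⟩ = δ_{αβ} α!/(|α|)!`, together with the `d`-shift. -/
structure DruryArveson (d : ℕ) where
  H : Type
  [normedAddCommGroup : NormedAddCommGroup H]
  [innerProductSpace : InnerProductSpace ℂ H]
  [completeSpace : CompleteSpace H]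
  emb : MvPolynomial (Fin d) ℂ →ₗ[ℂ] H
  denseRange : DenseRange emb
  inner_monomial : ∀ α β : Fin d →₀ ℕ,
    (inner ℂ (emb (monomial α (1 : ℂ))) (emb (monomial β (1 : ℂ))) : ℂ) =
      if α = β then (∏ i, ((α i).factorial : ℂ)) / ((∑ i, α i).factorial : ℂ) else 0
  shift : Fin d → H →L[ℂ] H
  shift_apply : ∀ (i : Fin d) (p : MvPolynomial (Fin d) ℂ), shift i (emb p) = emb (X i * p)

attribute [instance] DruryArveson.normedAddCommGroup DruryArveson.innerProductSpace
  DruryArveson.completeSpace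

namespace DruryArveson

variable {d : ℕ} (DA : DruryArveson d)

/-- The quotient module `F_I = H²_d ⊖ closure(I)`. -/
def FI (I : Ideal (MvPolynomial (Fin d) ℂ)) : Submodule ℂ DA.H :=
  ((Submodule.map DA.emb (Submodule.restrictScalars ℂ I)).topologicalClosure)ᗮ

instance (I : Ideal (MvPolynomial (Fin d) ℂ)) : CompleteSpace (DA.FI I) :=
  (Submodule.isClosed_orthogonal _).completeSpace_coe

/-- The compressed shift `S_i^I = P_{F_I} S_i |_{F_I}`. -/
def quotShift (I : Ideal (MvPolynomial (Fin d) ℂ)) (i : Fin d) : DA.FI I →L[ℂ] DA.FI I :=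
  (Submodule.orthogonalProjection (DA.FI I)).comp ((DA.shift i).comp (DA.FI I).subtypeL)

/-- The orthogonal projection of `H²_d` onto `F_I`, as an operator on `H²_d`. -/
def projFI (I : Ideal (MvPolynomial (Fin d) ℂ)) : DA.H →L[ℂ] DA.H :=
  (DA.FI I).subtypeL.comp (Submodule.orthogonalProjection (DA.FI I))

/-- `F_I` is `p`-essentially normal: all commutators `[S_i^I, S_j^{I*}]` lie in
the Schatten `p`-class. -/
def PEssentiallyNormal (I : Ideal (MvPolynomial (Fin d) ℂ)) (p : ℝ) : Prop :=
  ∀ i j : Fin d,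
    MemSchatten p
      (DA.quotShift I i ∘L ContinuousLinearMap.adjoint (DA.quotShift I j)
        - ContinuousLinearMap.adjoint (DA.quotShift I j) ∘L DA.quotShift I i)

end DruryArveson

/-- An ideal of `ℂ[z₁,…,z_d]` is homogeneous if it contains all homogeneous components
of each of its elements. -/
def IsHomogeneousIdeal {d : ℕ} (I : Ideal (MvPolynomial (Fin d) ℂ)) : Prop :=
  ∀ p ∈ I, ∀ n : ℕ, homogeneousComponent n p ∈ I

/-- `HasIdealDim I D` says that `D = deg h_I + 1`, where `h_I` is the Hilbert polynomial
of the homogeneous ideal `I`, i.e. `h_I(n) = dim (H_n ⊖ I_n)` for all large `n`. -/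
def HasIdealDim {d : ℕ} (I : Ideal (MvPolynomial (Fin d) ℂ)) (D : ℕ) : Prop :=
  ∃ h : Polynomial ℚ,
    (∀ᶠ n : ℕ in Filter.atTop,
      h.eval (n : ℚ) =
        ((finrank ℂ ↥(homogeneousSubmodule (Fin d) ℂ n)
          - finrank ℂ ↥(Submodule.restrictScalars ℂ I ⊓ homogeneousSubmodule (Fin d) ℂ n) : ℕ) : ℚ)) ∧
    D = h.natDegree + 1

/-- The zero set in the open unit ball `𝔹_d` of an ideal of polynomials. -/
def zeroVariety {d : ℕ} (I : Ideal (MvPolynomial (Fin d) ℂ)) : Set (EuclideanSpace ℂ (Fin d)) :=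
  {z | ‖z‖ < 1 ∧ ∀ p ∈ I, MvPolynomial.eval (fun i => z i) p = 0}

/-- A homogeneous variety in `𝔹_d` is the zero set in the ball of a homogeneous ideal. -/
def IsHomogeneousVariety {d : ℕ} (V : Set (EuclideanSpace ℂ (Fin d))) : Prop :=
  ∃ I : Ideal (MvPolynomial (Fin d) ℂ), IsHomogeneousIdeal I ∧ V = zeroVariety I

/-- The ideal `I(V)` of polynomials vanishing on `V`. -/
def ballVanishingIdeal {d : ℕ} (V : Set (EuclideanSpace ℂ (Fin d))) :
    Ideal (MvPolynomial (Fin d) ℂ) where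
  carrier := {p | ∀ z ∈ V, MvPolynomial.eval (fun i => z i) p = 0}
  add_mem' := fun hp hq z hz => by simp [hp z hz, hq z hz]
  zero_mem' := fun z hz => by simp
  smul_mem' := fun c p hp z hz => by simp [smul_eq_mul, hp z hz]

/-- `F_V := F_{I(V)}`. -/
def DruryArveson.FV {d : ℕ} (DA : DruryArveson d) (V : Set (EuclideanSpace ℂ (Fin d))) :
    Submodule ℂ DA.H :=
  DA.FI (ballVanishingIdeal V)

/-!
On monomials, `[S_i^*, S_j] z^α = c_α z^(α + e_j - e_i)` with
`|c_α| ‖z^(α + e_j - e_i)‖ ≤ 2 / (|α| + 1) ‖z^α‖`, and distinct monomials are sent to orthogonal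
vectors. Hence the commutator has norm at most `2 / (m + 1)` on the orthogonal complement of the
span of the monomials of degree `< m`, a space of dimension at most `m ^ d`. Its `n`-th
approximation number is therefore at most `2 / (m + 1)` whenever `m ^ d ≤ n`, i.e. `O(n^(-1/d))`,
and `∑ n^(-p/d)` converges for `p > d`.
-/

open Finsupp

section ApproxNumber

variable {H K : Type*} [NormedAddCommGroup H] [NormedAddCommGroup K]
  [NormedSpace ℂ H] [NormedSpace ℂ K]

lemma approxNumber_nonneg (T : H →L[ℂ] K) (n : ℕ) : 0 ≤ approxNumber T n :=
  Real.sInf_nonneg <| by rintro c ⟨F, -, rfl⟩; exact norm_nonneg _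

lemma approxNumber_le_norm_sub {T F : H →L[ℂ] K} {n : ℕ}
    (hF : Module.rank ℂ (LinearMap.range (F : H →ₗ[ℂ] K)) ≤ n) :
    approxNumber T n ≤ ‖T - F‖ :=
  csInf_le ⟨0, by rintro c ⟨F, -, rfl⟩; exact norm_nonneg _⟩ ⟨F, hF, rfl⟩

lemma memSchatten_of_approxNumber_le_div_rpow {T : H →L[ℂ] K} {C r p : ℝ}
    (h : ∀ n, 0 < n → approxNumber T n ≤ C / (n : ℝ) ^ r) (hr : 0 < r) (hrp : 1 < r * p) :
    MemSchatten p T := by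
  have hp : 0 ≤ p := by nlinarith
  have hC : 0 ≤ C := by simpa using (approxNumber_nonneg T 1).trans (h 1 one_pos)
  refine (summable_nat_add_iff 1).mp <| .of_nonneg_of_le
    (fun n => Real.rpow_nonneg (approxNumber_nonneg _ _) p) (fun n => ?_) <|
      (summable_nat_add_iff 1).mpr <| (Real.summable_nat_rpow_inv.mpr hrp).mul_left (C ^ p)
  have hn : (0 : ℝ) < (n + 1 : ℕ) := by positivity
  calc approxNumber T (n + 1) ^ p ≤ (C / ((n + 1 : ℕ) : ℝ) ^ r) ^ p :=
        Real.rpow_le_rpow (approxNumber_nonneg _ _) (h _ n.succ_pos) hp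
    _ = C ^ p * (((n + 1 : ℕ) : ℝ) ^ (r * p))⁻¹ := by
        rw [Real.div_rpow hC (by positivity), ← Real.rpow_mul hn.le, div_eq_mul_inv]

end ApproxNumber

section Orthogonal

variable {𝕜 E F ι : Type*} [RCLike 𝕜] [NormedAddCommGroup E] [InnerProductSpace 𝕜 E]
  [NormedAddCommGroup F] [InnerProductSpace 𝕜 F]

lemma norm_sum_sq_of_pairwise_inner_eq_zero {s : Finset ι} {v : ι → E}
    (h : (s : Set ι).Pairwise fun a b => ⟪v a, v b⟫_𝕜 = 0) :
    ‖∑ a ∈ s, v a‖ ^ 2 = ∑ a ∈ s, ‖v a‖ ^ 2 := by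
  have hsum : ⟪∑ a ∈ s, v a, ∑ b ∈ s, v b⟫_𝕜 = ∑ a ∈ s, ⟪v a, v a⟫_𝕜 := by
    rw [sum_inner]
    refine Finset.sum_congr rfl fun a ha => ?_
    rw [inner_sum]
    exact Finset.sum_eq_single_of_mem a ha fun b hb hba => h ha hb hba.symm
  simp only [inner_self_eq_norm_sq_to_K] at hsum
  exact_mod_cast hsum

lemma norm_map_sum_le_of_pairwise_inner_eq_zero (T : E →L[𝕜] F) {s : Finset ι} {v : ι → E}
    {R : ℝ} (hR : 0 ≤ R) (hv : (s : Set ι).Pairwise fun a b => ⟪v a, v b⟫_𝕜 = 0)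
    (hTv : (s : Set ι).Pairwise fun a b => ⟪T (v a), T (v b)⟫_𝕜 = 0)
    (hbound : ∀ a ∈ s, ‖T (v a)‖ ≤ R * ‖v a‖) :
    ‖T (∑ a ∈ s, v a)‖ ≤ R * ‖∑ a ∈ s, v a‖ := by
  refine (pow_le_pow_iff_left₀ (norm_nonneg _) (by positivity) two_ne_zero).mp ?_
  rw [map_sum, norm_sum_sq_of_pairwise_inner_eq_zero hTv, mul_pow,
    norm_sum_sq_of_pairwise_inner_eq_zero hv, Finset.mul_sum]
  gcongr with a ha
  rw [← mul_pow]
  exact pow_le_pow_left₀ (norm_nonneg _) (hbound a ha) 2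

end Orthogonal

namespace Finsupp

lemma degree_add_single {σ : Type*} (α : σ →₀ ℕ) (k : σ) :
    (α + single k 1).degree = α.degree + 1 := by
  rw [map_add, degree_single]

end Finsupp

namespace DruryArveson

variable {d : ℕ}

def monomialWeight (α : Fin d →₀ ℕ) : ℝ :=
  (∏ k, ((α k).factorial : ℝ)) / (α.degree.factorial : ℝ)

lemma monomialWeight_pos (α : Fin d →₀ ℕ) : 0 < monomialWeight α := by
  unfold monomialWeight; positivity

lemma monomialWeight_add_single (α : Fin d →₀ ℕ) (k : Fin d) :
    ((α.degree : ℝ) + 1) * monomialWeight (α + single k 1) = (α k + 1) * monomialWeight α := by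
  have hprod : ∏ m, (((α + single k 1 : Fin d →₀ ℕ) m).factorial : ℝ) =
      (α k + 1) * ∏ m, ((α m).factorial : ℝ) := by
    have hm : ∀ m, (((α + single k 1 : Fin d →₀ ℕ) m).factorial : ℝ) =
        (if m = k then (α k + 1 : ℝ) else 1) * (α m).factorial := by
      intro m
      obtain rfl | h := eq_or_ne m k
      · simp [Nat.factorial_succ]
      · simp [h]
    rw [Fintype.prod_congr _ _ hm, Finset.prod_mul_distrib, Fintype.prod_ite_eq']
  rw [monomialWeight, monomialWeight, hprod, degree_add_single, Nat.factorial_succ]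
  push_cast
  field_simp

lemma monomialWeight_add_single_sub_single {i j : Fin d} {α : Fin d →₀ ℕ} (hij : i ≠ j)
    (hi : α i ≠ 0) :
    α i * monomialWeight (α + single j 1 - single i 1) = (α j + 1) * monomialWeight α := by
  set γ := α + single j 1 - single i 1
  have hji : (single j 1 : Fin d →₀ ℕ) i = 0 := single_eq_of_ne hij
  have hγ : γ + single i 1 = α + single j 1 := tsub_add_cancel_of_le <|
    single_le_iff.mpr (by simpa [hji] using Nat.one_le_iff_ne_zero.mpr hi)
  have hγi : γ i + 1 = α i := by simpa [hji] using congr($hγ i)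
  have hdeg : γ.degree = α.degree := by simpa [degree_add_single] using congr(degree $hγ)
  have h1 := monomialWeight_add_single γ i
  have h2 := monomialWeight_add_single α j
  rw [hγ, hdeg] at h1
  rw [← hγi]
  push_cast
  linarith

def commutatorCoeff (i j : Fin d) (α : Fin d →₀ ℕ) : ℝ :=
  (α + single j 1 : Fin d →₀ ℕ) i / (α.degree + 1) - α i / α.degree

lemma commutatorCoeff_eq_zero {i j : Fin d} {α : Fin d →₀ ℕ}
    (h : (α + single j 1 : Fin d →₀ ℕ) i = 0) : commutatorCoeff i j α = 0 := by
  have hi : α i = 0 := by simp_all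
  simp [commutatorCoeff, h, hi]

lemma commutatorCoeff_self (i : Fin d) (α : Fin d →₀ ℕ) :
    commutatorCoeff i i α = (1 - α i / α.degree) / (α.degree + 1) := by
  simp only [commutatorCoeff, Finsupp.add_apply, single_eq_same]
  obtain hn | hn := eq_or_ne α.degree 0
  · have hi : α i = 0 := Nat.eq_zero_of_le_zero (hn ▸ le_degree i α)
    simp [hn, hi]
  · push_cast
    field_simp
    ring

lemma commutatorCoeff_of_ne {i j : Fin d} (hij : i ≠ j) (α : Fin d →₀ ℕ) :
    commutatorCoeff i j α = -(α i / (α.degree * (α.degree + 1))) := by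
  simp only [commutatorCoeff, Finsupp.add_apply, single_eq_of_ne hij, add_zero]
  obtain hn | hn := eq_or_ne α.degree 0
  · have hi : α i = 0 := Nat.eq_zero_of_le_zero (hn ▸ le_degree i α)
    simp [hn, hi]
  · field_simp
    ring

lemma commutatorCoeff_sq_mul_monomialWeight_le (i j : Fin d) (α : Fin d →₀ ℕ) :
    commutatorCoeff i j α ^ 2 * monomialWeight (α + single j 1 - single i 1) ≤
      (2 / (α.degree + 1)) ^ 2 * monomialWeight α := by
  have hw := monomialWeight_pos α
  have hαi : (α i : ℝ) ≤ α.degree := by exact_mod_cast le_degree i α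
  obtain rfl | hij := eq_or_ne i j
  · have hq₀ : 0 ≤ (α i : ℝ) / α.degree := by positivity
    have hq₁ : (α i : ℝ) / α.degree ≤ 1 := div_le_one_of_le₀ hαi (by positivity)
    rw [add_tsub_cancel_right, commutatorCoeff_self]
    gcongr
    linarith
  obtain hi | hi := eq_or_ne (α i) 0
  · simp only [commutatorCoeff_of_ne hij, hi]
    simp only [CharP.cast_eq_zero, zero_div, neg_zero, sq, zero_mul]
    positivity
  have hαj : (α j : ℝ) ≤ α.degree := by exact_mod_cast le_degree j α
  have hn : (1 : ℝ) ≤ α.degree := by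
    exact_mod_cast (Nat.one_le_iff_ne_zero.mpr hi).trans (le_degree i α)
  calc commutatorCoeff i j α ^ 2 * monomialWeight (α + single j 1 - single i 1)
      = α i * (α i * monomialWeight (α + single j 1 - single i 1)) /
          (α.degree * (α.degree + 1)) ^ 2 := by
          rw [commutatorCoeff_of_ne hij, neg_sq, div_pow]; ring
    _ = α i * (α j + 1) * monomialWeight α / (α.degree * (α.degree + 1)) ^ 2 := by
          rw [monomialWeight_add_single_sub_single hij hi]; ring
    _ ≤ 4 * α.degree ^ 2 * monomialWeight α / (α.degree * (α.degree + 1)) ^ 2 := by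
          gcongr ?_ * _ / _
          nlinarith
    _ = (2 / (α.degree + 1)) ^ 2 * monomialWeight α := by
          field_simp
          ring

variable (DA : DruryArveson d)

def monomialVec (α : Fin d →₀ ℕ) : DA.H := DA.emb (monomial α 1)

lemma inner_monomialVec (α β : Fin d →₀ ℕ) :
    ⟪DA.monomialVec α, DA.monomialVec β⟫_ℂ = if α = β then (monomialWeight α : ℂ) else 0 := by
  rw [monomialVec, monomialVec, DA.inner_monomial, monomialWeight, degree_eq_sum]
  push_cast
  rfl

lemma norm_monomialVec_sq (α : Fin d →₀ ℕ) : ‖DA.monomialVec α‖ ^ 2 = monomialWeight α := by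
  have h := DA.inner_monomialVec α α
  rw [if_pos rfl, inner_self_eq_norm_sq_to_K] at h
  exact Complex.ofReal_injective (by push_cast; exact h)

lemma emb_eq_sum_monomialVec (p : MvPolynomial (Fin d) ℂ) :
    DA.emb p = ∑ α ∈ p.support, coeff α p • DA.monomialVec α := by
  conv_lhs => rw [p.as_sum]
  simp only [map_sum, monomialVec, ← map_smul, smul_eq_mul, mul_one]

lemma ext_monomialVec {x y : DA.H}
    (h : ∀ β, ⟪x, DA.monomialVec β⟫_ℂ = ⟪y, DA.monomialVec β⟫_ℂ) : x = y := by
  refine DA.denseRange.eq_of_inner_left (𝕜 := ℂ) fun p => ?_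
  simp only [emb_eq_sum_monomialVec, inner_sum, inner_smul_right, h]

lemma shift_monomialVec (k : Fin d) (α : Fin d →₀ ℕ) :
    DA.shift k (DA.monomialVec α) = DA.monomialVec (α + single k 1) := by
  rw [monomialVec, DA.shift_apply, monomialVec, X, monomial_mul, one_mul, add_comm]

-- `α - single k 1` truncates exactly when `α k = 0`, and then the coefficient vanishes.
lemma adjoint_shift_monomialVec (k : Fin d) (α : Fin d →₀ ℕ) :
    (DA.shift k).adjoint (DA.monomialVec α) =
      ((α k / α.degree : ℝ) : ℂ) • DA.monomialVec (α - single k 1) := by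
  refine DA.ext_monomialVec fun β => ?_
  rw [ContinuousLinearMap.adjoint_inner_left, shift_monomialVec, inner_monomialVec,
    inner_smul_left, inner_monomialVec, Complex.conj_ofReal]
  by_cases h : α = β + single k 1
  · subst h
    have hw := monomialWeight_add_single β k
    rw [if_pos rfl, add_tsub_cancel_right, if_pos rfl, degree_add_single, ← Complex.ofReal_mul]
    congr 1
    simp only [Finsupp.add_apply, single_eq_same]
    push_cast
    field_simp
    linarith
  · rw [if_neg h]
    by_cases hβ : α - single k 1 = β
    · have hk : α k = 0 := by
        by_contra hk
        have hle := single_le_iff.mpr (Nat.one_le_iff_ne_zero.mpr hk)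
        exact h (hβ ▸ (tsub_add_cancel_of_le hle).symm)
      simp [hk]
    · simp [hβ]

def shiftCommutator (i j : Fin d) : DA.H →L[ℂ] DA.H :=
  (DA.shift i).adjoint ∘L DA.shift j - DA.shift j ∘L (DA.shift i).adjoint

lemma shiftCommutator_monomialVec (i j : Fin d) (α : Fin d →₀ ℕ) :
    DA.shiftCommutator i j (DA.monomialVec α) =
      (commutatorCoeff i j α : ℂ) • DA.monomialVec (α + single j 1 - single i 1) := by
  have hswap : ((α i / α.degree : ℝ) : ℂ) • DA.monomialVec (α - single i 1 + single j 1) =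
      ((α i / α.degree : ℝ) : ℂ) • DA.monomialVec (α + single j 1 - single i 1) := by
    obtain hi | hi := eq_or_ne (α i) 0
    · simp [hi]
    · rw [tsub_add_eq_add_tsub (single_le_iff.mpr (Nat.one_le_iff_ne_zero.mpr hi))]
  simp only [shiftCommutator, _root_.sub_apply, ContinuousLinearMap.comp_apply]
  rw [shift_monomialVec, adjoint_shift_monomialVec, adjoint_shift_monomialVec, map_smul,
    shift_monomialVec, hswap, degree_add_single, ← sub_smul, commutatorCoeff]
  push_cast
  rfl

lemma norm_shiftCommutator_monomialVec_le (i j : Fin d) (α : Fin d →₀ ℕ) :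
    ‖DA.shiftCommutator i j (DA.monomialVec α)‖ ≤ 2 / (α.degree + 1) * ‖DA.monomialVec α‖ := by
  refine (pow_le_pow_iff_left₀ (norm_nonneg _) (by positivity) two_ne_zero).mp ?_
  rw [shiftCommutator_monomialVec, norm_smul, mul_pow, mul_pow, norm_monomialVec_sq,
    norm_monomialVec_sq, Complex.norm_real, Real.norm_eq_abs, sq_abs]
  exact commutatorCoeff_sq_mul_monomialWeight_le i j α

lemma inner_shiftCommutator_monomialVec_eq_zero (i j : Fin d) {α β : Fin d →₀ ℕ}
    (hαβ : α ≠ β) :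
    ⟪DA.shiftCommutator i j (DA.monomialVec α), DA.shiftCommutator i j (DA.monomialVec β)⟫_ℂ =
      0 := by
  rw [shiftCommutator_monomialVec, shiftCommutator_monomialVec, inner_smul_left,
    inner_smul_right, inner_monomialVec]
  obtain hα | hα := eq_or_ne ((α + single j 1 : Fin d →₀ ℕ) i) 0
  · simp [commutatorCoeff_eq_zero hα]
  obtain hβ | hβ := eq_or_ne ((β + single j 1 : Fin d →₀ ℕ) i) 0
  · simp [commutatorCoeff_eq_zero hβ]
  rw [if_neg, mul_zero, mul_zero]
  intro h
  apply hαβ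
  have := congr($h + single i 1)
  rwa [tsub_add_cancel_of_le (single_le_iff.mpr (Nat.one_le_iff_ne_zero.mpr hα)),
    tsub_add_cancel_of_le (single_le_iff.mpr (Nat.one_le_iff_ne_zero.mpr hβ)),
    add_left_inj] at this

lemma norm_shiftCommutator_sum_le (i j : Fin d) {m : ℕ} {s : Finset (Fin d →₀ ℕ)}
    (hs : ∀ α ∈ s, m ≤ α.degree) (c : (Fin d →₀ ℕ) → ℂ) :
    ‖DA.shiftCommutator i j (∑ α ∈ s, c α • DA.monomialVec α)‖ ≤
      2 / (m + 1) * ‖∑ α ∈ s, c α • DA.monomialVec α‖ := by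
  refine norm_map_sum_le_of_pairwise_inner_eq_zero _ (by positivity) ?_ ?_ fun α hα => ?_
  · intro α _ β _ hαβ
    simp [inner_smul_left, inner_smul_right, inner_monomialVec, hαβ]
  · intro α _ β _ hαβ
    simp [inner_smul_left, inner_smul_right, inner_shiftCommutator_monomialVec_eq_zero _ _ _ hαβ]
  · rw [map_smul, norm_smul, norm_smul, mul_left_comm]
    gcongr
    refine (DA.norm_shiftCommutator_monomialVec_le i j α).trans ?_
    gcongr
    exact_mod_cast hs α hα

def lowDegreeSpan (m : ℕ) : Submodule ℂ DA.H :=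
  Submodule.span ℂ (DA.monomialVec '' {α | α.degree < m})

instance (m : ℕ) : FiniteDimensional ℂ (DA.lowDegreeSpan m) :=
  FiniteDimensional.span_of_finite ℂ ((finite_of_degree_lt m).image _)

lemma rank_lowDegreeSpan_le (m : ℕ) : Module.rank ℂ (DA.lowDegreeSpan m) ≤ (m ^ d : ℕ) := by
  let toBox : {α : Fin d →₀ ℕ | α.degree < m} → Fin d → Fin m :=
    fun α k => ⟨α.1 k, (le_degree k α.1).trans_lt α.2⟩
  have htoBox : Function.Injective toBox := fun α β h =>
    Subtype.ext <| Finsupp.ext fun k => congr(Fin.val ($h k))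
  calc Module.rank ℂ (DA.lowDegreeSpan m)
      ≤ Cardinal.mk (DA.monomialVec '' {α | α.degree < m}) := rank_span_le _
    _ ≤ Cardinal.mk {α : Fin d →₀ ℕ | α.degree < m} := Cardinal.mk_image_le
    _ ≤ Cardinal.mk (Fin d → Fin m) := Cardinal.mk_le_of_injective htoBox
    _ = (m ^ d : ℕ) := by simp

lemma monomialVec_mem_orthogonal_lowDegreeSpan {m : ℕ} {α : Fin d →₀ ℕ} (h : m ≤ α.degree) :
    DA.monomialVec α ∈ (DA.lowDegreeSpan m)ᗮ := by
  have hortho : DA.lowDegreeSpan m ⟂ ℂ ∙ DA.monomialVec α := by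
    refine Submodule.isOrtho_span.mpr ?_
    rintro _ ⟨β, hβ, rfl⟩ _ rfl
    rw [inner_monomialVec, if_neg (by rintro rfl; exact (lt_of_lt_of_le hβ h).false)]
  exact Submodule.isOrtho_iff_le.mp hortho.symm (Submodule.mem_span_singleton_self _)

lemma norm_shiftCommutator_starProjection_orthogonal_le (i j : Fin d) (m : ℕ) (x : DA.H) :
    ‖DA.shiftCommutator i j ((DA.lowDegreeSpan m)ᗮ.starProjection x)‖ ≤ 2 / (m + 1) * ‖x‖ := by
  set K := DA.lowDegreeSpan m
  set T := DA.shiftCommutator i j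
  suffices h : ∀ x, ‖T (Kᗮ.starProjection x)‖ ≤ 2 / (m + 1) * ‖Kᗮ.starProjection x‖ from
    (h x).trans (by gcongr; exact Kᗮ.norm_starProjection_apply_le x)
  -- On a polynomial, the projection onto `Kᗮ` keeps exactly its monomials of degree `≥ m`.
  refine fun x => DA.denseRange.induction_on x
    (isClosed_le (by fun_prop) (by fun_prop)) fun p => ?_
  classical
  rw [emb_eq_sum_monomialVec, ← Finset.sum_filter_add_sum_filter_not _ fun α => m ≤ α.degree]
  set high := ∑ α ∈ p.support with m ≤ α.degree, coeff α p • DA.monomialVec α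
  set low := ∑ α ∈ p.support with ¬m ≤ α.degree, coeff α p • DA.monomialVec α
  have hhigh : high ∈ Kᗮ := Submodule.sum_mem _ fun α hα => Submodule.smul_mem _ _ <|
    DA.monomialVec_mem_orthogonal_lowDegreeSpan (Finset.mem_filter.mp hα).2
  have hlow : low ∈ K := Submodule.sum_mem _ fun α hα => Submodule.smul_mem _ _ <|
    Submodule.subset_span ⟨α, not_le.mp (Finset.mem_filter.mp hα).2, rfl⟩
  rw [map_add, Submodule.starProjection_eq_self_iff.mpr hhigh,
    Submodule.starProjection_orthogonal_apply_eq_zero hlow, add_zero]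
  exact DA.norm_shiftCommutator_sum_le i j (fun α hα => (Finset.mem_filter.mp hα).2) _

lemma approxNumber_shiftCommutator_le (i j : Fin d) {m n : ℕ} (hn : m ^ d ≤ n) :
    approxNumber (DA.shiftCommutator i j) n ≤ 2 / (m + 1) := by
  set K := DA.lowDegreeSpan m
  set T := DA.shiftCommutator i j
  have hrank : Module.rank ℂ (LinearMap.range (T ∘L K.starProjection : DA.H →ₗ[ℂ] DA.H)) ≤ n :=
    calc Module.rank ℂ (LinearMap.range (T ∘L K.starProjection : DA.H →ₗ[ℂ] DA.H))
        ≤ Module.rank ℂ (LinearMap.range (K.starProjection : DA.H →ₗ[ℂ] DA.H)) :=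
          LinearMap.rank_comp_le_right _ _
      _ = Module.rank ℂ K := by rw [Submodule.range_starProjection]
      _ ≤ n := (DA.rank_lowDegreeSpan_le m).trans (by exact_mod_cast hn)
  refine (approxNumber_le_norm_sub hrank).trans <|
    ContinuousLinearMap.opNorm_le_bound _ (by positivity) fun x => ?_
  rw [_root_.sub_apply, ContinuousLinearMap.comp_apply, ← map_sub,
    ← Submodule.starProjection_orthogonal_val]
  exact DA.norm_shiftCommutator_starProjection_orthogonal_le i j m x

lemma approxNumber_shiftCommutator_le_div_rpow (i j : Fin d) {n : ℕ} (hn : 0 < n) :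
    approxNumber (DA.shiftCommutator i j) n ≤ 2 / (n : ℝ) ^ (d : ℝ)⁻¹ := by
  have hd : d ≠ 0 := i.pos.ne'
  have hroot : 0 < (n : ℝ) ^ (d : ℝ)⁻¹ := by positivity
  set m := ⌊(n : ℝ) ^ (d : ℝ)⁻¹⌋₊
  have hm : m ^ d ≤ n := by
    have := pow_le_pow_left₀ (Nat.cast_nonneg m) (Nat.floor_le hroot.le) d
    rw [Real.rpow_inv_natCast_pow (Nat.cast_nonneg n) hd] at this
    exact_mod_cast this
  refine (DA.approxNumber_shiftCommutator_le i j hm).trans ?_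
  gcongr
  exact (Nat.lt_floor_add_one _).le

end DruryArveson

/-- The commutators `[S_i^*, S_j]` of the `d`-shift on the
Drury–Arveson space lie in the Schatten `p`-class for every `p > d`. -/
theorem shift_commutators_schatten {d : ℕ} (DA : DruryArveson d)
    (p : ℝ) (hp : (d : ℝ) < p) (i j : Fin d) :
    MemSchatten p
      (ContinuousLinearMap.adjoint (DA.shift i) ∘L DA.shift j
        - DA.shift j ∘L ContinuousLinearMap.adjoint (DA.shift i)) := by
  have hd : (0 : ℝ) < d := by exact_mod_cast i.pos
  refine memSchatten_of_approxNumber_le_div_rpow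
    (fun n hn => DA.approxNumber_shiftCommutator_le_div_rpow i j hn) (inv_pos.mpr hd) ?_
  rwa [inv_mul_eq_div, one_lt_div hd]

end
end

section
/- Let H and K be Hilbert spaces with orthogonal direct sum decompositions H = ⊕_{n=0}^∞ H_n and K = ⊕_{n=0}^∞ K_n into closed subspaces, with each H_n finite-dimensional. Let T : H → K be a bounded linear operator that is graded, i.e. T(H_n) ⊆ K_n for all n. Suppose there exist N ∈ ℕ and δ > 0 such that ‖Tv‖ ≥ δ‖v‖ for all v ∈ H_n and all n ≥ N. Then T has closed range. -/
open scoped InnerProductSpace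
open MvPolynomial Module

noncomputable section

/-! The high pieces `Hₙ`, `n ≥ N`, are mutually orthogonal and so are their images, so by
Pythagoras the bound `δ‖v‖ ≤ ‖Tv‖` passes from the pieces to their algebraic sum, and by
continuity to its closure `E`. Being bounded below on the closed subspace `E`, `T` maps it onto a
closed subspace. The finite-dimensional low part `H₀ ⊕ ⋯ ⊕ H_{N-1}` together with `E` spans a
closed, hence (by density) the whole, space; so `E` has finite codimension, and a continuous
linear map with closed image on a subspace of finite codimension has closed range. -/

theorem OrthogonalFamily.mul_norm_le_norm_of_mem_iSup {ι 𝕜 E F : Type*} [RCLike 𝕜]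
    [NormedAddCommGroup E] [InnerProductSpace 𝕜 E] [NormedAddCommGroup F] [InnerProductSpace 𝕜 F]
    {V : ι → Submodule 𝕜 E} {W : ι → Submodule 𝕜 F}
    (hV : OrthogonalFamily 𝕜 (fun i => V i) fun i => (V i).subtypeₗᵢ)
    (hW : OrthogonalFamily 𝕜 (fun i => W i) fun i => (W i).subtypeₗᵢ)
    (T : E →ₗ[𝕜] F) (hT : ∀ i, ∀ v ∈ V i, T v ∈ W i) {δ : ℝ} (hδ : 0 ≤ δ)
    (hbelow : ∀ i, ∀ v ∈ V i, δ * ‖v‖ ≤ ‖T v‖) {v : E} (hv : v ∈ ⨆ i, V i) :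
    δ * ‖v‖ ≤ ‖T v‖ := by
  classical
  obtain ⟨f, rfl⟩ := (Submodule.mem_iSup_iff_exists_dfinsupp' _ _).mp hv
  let g : ∀ i, W i := fun i => ⟨T (f i), hT i _ (f i).2⟩
  have hTf : T (f.sum fun _ x => x) = ∑ i ∈ f.support, (g i : F) := by
    simp [g, DFinsupp.sum, map_sum]
  have hnorm : ‖∑ i ∈ f.support, (f i : E)‖ ^ 2 = ∑ i ∈ f.support, ‖f i‖ ^ 2 :=
    hV.norm_sum f f.support
  have hsq : (δ * ‖∑ i ∈ f.support, (f i : E)‖) ^ 2 ≤ ‖∑ i ∈ f.support, (g i : F)‖ ^ 2 :=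
    calc (δ * ‖∑ i ∈ f.support, (f i : E)‖) ^ 2
        = ∑ i ∈ f.support, (δ * ‖f i‖) ^ 2 := by
          rw [mul_pow, hnorm, Finset.mul_sum]
          simp only [mul_pow]
      _ ≤ ∑ i ∈ f.support, ‖g i‖ ^ 2 := Finset.sum_le_sum fun i _ =>
          pow_le_pow_left₀ (by positivity) (hbelow i _ (f i).2) 2
      _ = ‖∑ i ∈ f.support, (g i : F)‖ ^ 2 := (hW.norm_sum g _).symm
  rw [hTf]
  exact (pow_le_pow_iff_left₀ (by positivity) (norm_nonneg _) two_ne_zero).mp hsq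

theorem ContinuousLinearMap.mul_norm_le_norm_of_mem_closure {𝕜 E F : Type*}
    [NontriviallyNormedField 𝕜] [NormedAddCommGroup E] [NormedSpace 𝕜 E]
    [NormedAddCommGroup F] [NormedSpace 𝕜 F] (T : E →L[𝕜] F) {s : Set E} {δ : ℝ}
    (hbelow : ∀ v ∈ s, δ * ‖v‖ ≤ ‖T v‖) {v : E} (hv : v ∈ closure s) :
    δ * ‖v‖ ≤ ‖T v‖ :=
  closure_minimal hbelow (isClosed_le (continuous_const.mul continuous_norm) T.continuous.norm) hv

theorem ContinuousLinearMap.isClosed_map_of_mul_norm_le {𝕜 E F : Type*}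
    [NontriviallyNormedField 𝕜] [NormedAddCommGroup E] [NormedSpace 𝕜 E] [CompleteSpace E]
    [NormedAddCommGroup F] [NormedSpace 𝕜 F] (T : E →L[𝕜] F) {S : Submodule 𝕜 E}
    (hS : IsClosed (S : Set E)) {δ : ℝ} (hδ : 0 < δ) (hbelow : ∀ v ∈ S, δ * ‖v‖ ≤ ‖T v‖) :
    IsClosed (S.map (T : E →ₗ[𝕜] F) : Set F) := by
  have := hS.completeSpace_coe
  have hanti : AntilipschitzWith ⟨δ⁻¹, by positivity⟩ (T.comp S.subtypeL) :=
    (T.comp S.subtypeL).antilipschitz_of_bound fun x => by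
      change ‖(x : E)‖ ≤ δ⁻¹ * ‖T x‖
      rw [inv_mul_eq_div, le_div_iff₀ hδ, mul_comm]
      exact hbelow x x.2
  have hrange : Set.range (T.comp S.subtypeL) = S.map (T : E →ₗ[𝕜] F) := by
    ext; simp
  exact hrange ▸ hanti.isClosed_range (T.comp S.subtypeL).uniformContinuous

theorem Submodule.cofg_topologicalClosure_iSup_ge {𝕜 E : Type*} [NontriviallyNormedField 𝕜]
    [CompleteSpace 𝕜] [NormedAddCommGroup E] [NormedSpace 𝕜 E] (V : ℕ → Submodule 𝕜 E)
    (hdense : (⨆ n, V n).topologicalClosure = ⊤) (N : ℕ)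
    (hfd : ∀ n < N, FiniteDimensional 𝕜 (V n)) :
    (⨆ i : {n // N ≤ n}, V i).topologicalClosure.CoFG := by
  set C := (⨆ i : {n // N ≤ n}, V i).topologicalClosure
  set D := ⨆ i : Fin N, V i
  have : ∀ i : Fin N, FiniteDimensional 𝕜 (V i) := fun i => hfd i i.2
  have : FiniteDimensional 𝕜 D := Submodule.finiteDimensional_iSup _
  have hCD : Codisjoint D C := by
    rw [codisjoint_iff, eq_top_iff, ← hdense, sup_comm]
    refine Submodule.topologicalClosure_minimal _ (iSup_le fun n => ?_)
      (C.isClosed_sup_finiteDimensional D (Submodule.isClosed_topologicalClosure _))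
    rcases lt_or_ge n N with h | h
    · exact le_sup_of_le_right (le_iSup (fun i : Fin N => V i) ⟨n, h⟩)
    · exact le_sup_of_le_left ((le_iSup (fun i : {n // N ≤ n} => V i) ⟨n, h⟩).trans
        (Submodule.le_topologicalClosure _))
  exact (Submodule.fg_iff_finiteDimensional D).mpr inferInstance |>.cofg_of_codisjoint hCD

theorem closed_range_of_graded_bounded_below_general {H K : Type*}
    [NormedAddCommGroup H] [InnerProductSpace ℂ H] [CompleteSpace H]
    [NormedAddCommGroup K] [InnerProductSpace ℂ K]
    (Hn : ℕ → Submodule ℂ H) (Kn : ℕ → Submodule ℂ K)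
    (hHorth : ∀ m n, m ≠ n → ∀ x ∈ Hn m, ∀ y ∈ Hn n, (inner ℂ x y : ℂ) = 0)
    (hKorth : ∀ m n, m ≠ n → ∀ x ∈ Kn m, ∀ y ∈ Kn n, (inner ℂ x y : ℂ) = 0)
    (hHfd : ∀ n, FiniteDimensional ℂ ↥(Hn n))
    (hHdense : (⨆ n, Hn n).topologicalClosure = ⊤)
    (T : H →L[ℂ] K) (hgraded : ∀ n, ∀ v ∈ Hn n, T v ∈ Kn n)
    (N : ℕ) (δ : ℝ) (hδ : 0 < δ)
    (hbelow : ∀ n, N ≤ n → ∀ v ∈ Hn n, δ * ‖v‖ ≤ ‖T v‖) :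
    IsClosed (Set.range T) := by
  set E := (⨆ i : {n // N ≤ n}, Hn i).topologicalClosure
  have hHhigh : OrthogonalFamily ℂ (fun i : {n // N ≤ n} => Hn i) fun i => (Hn i).subtypeₗᵢ :=
    fun i j hij v w => hHorth i j (Subtype.coe_injective.ne hij) v v.2 w w.2
  have hKhigh : OrthogonalFamily ℂ (fun i : {n // N ≤ n} => Kn i) fun i => (Kn i).subtypeₗᵢ :=
    fun i j hij v w => hKorth i j (Subtype.coe_injective.ne hij) v v.2 w w.2
  have hbelowE : ∀ v ∈ E, δ * ‖v‖ ≤ ‖T v‖ := fun v hv =>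
    T.mul_norm_le_norm_of_mem_closure (fun w hw =>
      hHhigh.mul_norm_le_norm_of_mem_iSup hKhigh T (fun i => hgraded i) hδ.le
        (fun i => hbelow i i.2) hw) hv
  have := Submodule.cofg_topologicalClosure_iSup_ge Hn hHdense N fun n _ => hHfd n
  have hrange := (T : H →ₗ[ℂ] K).isClosed_range_of_isClosed_map_of_finiteDimensional_quotient
    (T.isClosed_map_of_mul_norm_le (Submodule.isClosed_topologicalClosure _) hδ hbelowE)
  rwa [LinearMap.coe_range, ContinuousLinearMap.coe_coe] at hrange

/-- A graded bounded operator between Hilbert spaces with orthogonal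
graded decompositions, which is uniformly bounded below on all sufficiently high graded
pieces (the lower pieces being finite-dimensional), has closed range. -/
theorem closed_range_of_graded_bounded_below {H K : Type*}
    [NormedAddCommGroup H] [InnerProductSpace ℂ H] [CompleteSpace H]
    [NormedAddCommGroup K] [InnerProductSpace ℂ K] [CompleteSpace K]
    (Hn : ℕ → Submodule ℂ H) (Kn : ℕ → Submodule ℂ K)
    (hHorth : ∀ m n, m ≠ n → ∀ x ∈ Hn m, ∀ y ∈ Hn n, (inner ℂ x y : ℂ) = 0)
    (hKorth : ∀ m n, m ≠ n → ∀ x ∈ Kn m, ∀ y ∈ Kn n, (inner ℂ x y : ℂ) = 0)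
    (hHfd : ∀ n, FiniteDimensional ℂ ↥(Hn n))
    (hKcl : ∀ n, IsClosed ((Kn n : Set K)))
    (hHdense : (⨆ n, Hn n).topologicalClosure = ⊤)
    (hKdense : (⨆ n, Kn n).topologicalClosure = ⊤)
    (T : H →L[ℂ] K) (hgraded : ∀ n, ∀ v ∈ Hn n, T v ∈ Kn n)
    (N : ℕ) (δ : ℝ) (hδ : 0 < δ)
    (hbelow : ∀ n, N ≤ n → ∀ v ∈ Hn n, δ * ‖v‖ ≤ ‖T v‖) :
    IsClosed (Set.range T) :=
  closed_range_of_graded_bounded_below_general Hn Kn hHorth hKorth hHfd hHdense T hgraded N δ hδ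
    hbelow

end
end
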